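/- Let (E,ℒ,𝒜) be a weakly left-resolving, normal labelled space. Then the topology on Γ whose basis is the collection of sets Z_{s,e:e₁,…,eₙ} coincides with the Renault–Deaconu topology on Γ, i.e., the topology whose basic open sets are the sets 𝒱(X,Y,m,n) = {(η, m−n, ξ) ∈ Γ : (η,ξ) ∈ X × Y and σ^m(η) = σ^n(ξ)}, where m,n ∈ ℕ and X ⊆ dom(σ^m), Y ⊆ dom(σ^n) are open sets on which σ^m and σ^n, respectively, are injective. -/

import Mathlib

open Classical

universe u v w

/-! ## Words over an alphabet -/

/-- Finite-or-infinite words over the alphabet `A`: `Sum.inl l` is the finite word `l`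
(with `[]` playing the role of the empty word `ω`), and `Sum.inr f` is the infinite word `f`. -/
abbrev Word (A : Type w) := List A ⊕ (ℕ → A)

/-- The length `|α| ∈ ℕ∞` of a word. -/
def wlength {A : Type w} : Word A → ℕ∞ :=
  Sum.elim (fun l => (l.length : ℕ∞)) fun _ => ⊤

/-- The finite prefix `α_{1,n}` of a word `α`. -/
def wprefix {A : Type w} : Word A → ℕ → List A :=
  Sum.elim (fun l n => l.take n) fun f n => List.ofFn fun i : Fin n => f i

/-- Concatenation `αβ` of a finite word `α` with a word `β`. -/
def wappend {A : Type w} (α : List A) : Word A → Word A :=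
  Sum.elim (fun l => Sum.inl (α ++ l)) fun f =>
    Sum.inr fun n => if h : n < α.length then α.get ⟨n, h⟩ else f (n - α.length)

/-- `β` is a beginning (finite prefix) of the word `α`. -/
def WPrefix {A : Type w} (β : List A) : Word A → Prop :=
  Sum.elim (fun l => β <+: l) fun f => β = List.ofFn fun i : Fin β.length => f i

/-! ## Triples -/

/-- Formal triples `(α, X, β)` together with a zero element; the inverse semigroup `S`
of a labelled space consists of such elements. -/
inductive Tr (V : Type u) (A : Type w) where
  | zero : Tr V A
  | mk : List A → Set V → List A → Tr V A

/-- The involution `(α,A,β)* = (β,A,α)` (fixing `0`). -/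
def Tr.tstar {V : Type u} {A : Type w} : Tr V A → Tr V A
  | .zero => .zero
  | .mk α X β => .mk β X α

/-! ## Labelled spaces -/

/-- The data of a labelled space `(E, ℒ, 𝒜)`: a directed graph on nonempty vertex/edge
sets, a surjective labelling map onto the alphabet `A`, and a family `𝒜` of subsets
of the vertex set. -/
structure LblSp (V : Type u) (E : Type v) (A : Type w) where
  src : E → V
  rng : E → V
  lab : E → A
  lab_surj : Function.Surjective lab
  nonempty_V : Nonempty V
  nonempty_E : Nonempty E
  𝒜 : Set (Set V)

namespace LblSp

variable {V : Type u} {Ed : Type v} {A : Type w} (Λ : LblSp V Ed A)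

/-- `α ≠ ω` is the label of some finite path of the graph. -/
def IsPathLabel (α : List A) : Prop :=
  ∃ l : List Ed, l ≠ [] ∧ List.Chain' (fun e f => Λ.rng e = Λ.src f) l ∧ l.map Λ.lab = α

/-- `ℒ^*`: the finite labelled paths, together with the empty word. -/
def LStar : Set (List A) := {α | α = [] ∨ Λ.IsPathLabel α}

/-- `ℒ^∞`: the infinite labelled paths. -/
def LInfty : Set (ℕ → A) :=
  {f | ∃ e : ℕ → Ed, (∀ n, Λ.rng (e n) = Λ.src (e (n + 1))) ∧ ∀ n, Λ.lab (e n) = f n}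

/-- `ℒ^{≤∞} = ℒ^* ∪ ℒ^∞`, as a predicate on `Word A`. -/
def IsWordW : Word A → Prop := Sum.elim (· ∈ Λ.LStar) (· ∈ Λ.LInfty)

/-- The relative range `r(X, α)` (with `r(X, ω) = X`). -/
noncomputable def relRange (X : Set V) (α : List A) : Set V :=
  if α = [] then X
  else {v | ∃ (l : List Ed) (h : l ≠ []), List.Chain' (fun e f => Λ.rng e = Λ.src f) l ∧
        l.map Λ.lab = α ∧ Λ.src (l.head h) ∈ X ∧ Λ.rng (l.getLast h) = v}

/-- The range `r(α) = r(E⁰, α)`. -/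
noncomputable def rangeL (α : List A) : Set V := Λ.relRange Set.univ α

/-- `𝒜^α = {X ∈ 𝒜 : X ⊆ r(α)}`. -/
noncomputable def Aset (α : List A) : Set (Set V) := {X | X ∈ Λ.𝒜 ∧ X ⊆ Λ.rangeL α}

/-- `(E, ℒ, 𝒜)` is a labelled space: `𝒜` is closed under finite intersections and
unions, contains all ranges `r(α)` for `α ∈ ℒ^{≥1}`, and is closed under relative ranges. -/
structure IsLS : Prop where
  inter_mem : ∀ X ∈ Λ.𝒜, ∀ Y ∈ Λ.𝒜, X ∩ Y ∈ Λ.𝒜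
  union_mem : ∀ X ∈ Λ.𝒜, ∀ Y ∈ Λ.𝒜, X ∪ Y ∈ Λ.𝒜
  range_mem : ∀ α ∈ Λ.LStar, α ≠ [] → Λ.rangeL α ∈ Λ.𝒜
  relRange_mem : ∀ X ∈ Λ.𝒜, ∀ α ∈ Λ.LStar, Λ.relRange X α ∈ Λ.𝒜

/-- A weakly left-resolving labelled space. -/
structure IsWLR : Prop where
  toIsLS : Λ.IsLS
  wlr : ∀ X ∈ Λ.𝒜, ∀ Y ∈ Λ.𝒜, ∀ α ∈ Λ.LStar, α ≠ [] →
    Λ.relRange (X ∩ Y) α = Λ.relRange X α ∩ Λ.relRange Y α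

/-- A weakly left-resolving normal labelled space. -/
structure IsNormal : Prop where
  toIsWLR : Λ.IsWLR
  sdiff_mem : ∀ X ∈ Λ.𝒜, ∀ Y ∈ Λ.𝒜, X \ Y ∈ Λ.𝒜

/-! ## The inverse semigroup `S` -/

/-- The underlying set of the inverse semigroup
`S = {(α,A,β) : α, β ∈ ℒ^*, A ∈ 𝒜^α ∩ 𝒜^β, A ≠ ∅} ∪ {0}`. -/
def SSet : Set (Tr V A) :=
  {t | t = Tr.zero ∨ ∃ α X β, t = Tr.mk α X β ∧ α ∈ Λ.LStar ∧ β ∈ Λ.LStar ∧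
    X ∈ Λ.Aset α ∧ X ∈ Λ.Aset β ∧ X.Nonempty}

/-- The semilattice of idempotents `E(S) = {(α,A,α)} ∪ {0}`. -/
def ESet : Set (Tr V A) :=
  {t | t = Tr.zero ∨ ∃ α X, t = Tr.mk α X α ∧ α ∈ Λ.LStar ∧ X ∈ Λ.Aset α ∧ X.Nonempty}

/-- The product of `S`. -/
noncomputable def tmul : Tr V A → Tr V A → Tr V A
  | Tr.zero, _ => Tr.zero
  | Tr.mk _ _ _, Tr.zero => Tr.zero
  | Tr.mk α X β, Tr.mk γ Y δ =>
    if β <+: γ ∧ (Λ.relRange X (γ.drop β.length) ∩ Y).Nonempty then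
      Tr.mk (α ++ γ.drop β.length) (Λ.relRange X (γ.drop β.length) ∩ Y) δ
    else if γ <+: β ∧ (X ∩ Λ.relRange Y (β.drop γ.length)).Nonempty then
      Tr.mk α (X ∩ Λ.relRange Y (β.drop γ.length)) (δ ++ β.drop γ.length)
    else Tr.zero

/-! ## Filters in `E(S)`, characters, and the tight spectrum -/

/-- A filter in `E(S)`: a nonempty subset of `E(S) ∖ {0}` closed under products and
upward closed in the natural order (`p ≤ q ↔ pq = p`). -/
def IsFilterES (ξ : Set (Tr V A)) : Prop :=
  ξ.Nonempty ∧ (∀ t ∈ ξ, t ∈ Λ.ESet ∧ t ≠ Tr.zero) ∧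
  (∀ p ∈ ξ, ∀ q ∈ ξ, Λ.tmul p q ∈ ξ) ∧
  (∀ p ∈ ξ, ∀ q ∈ Λ.ESet, Λ.tmul p q = p → q ∈ ξ)

/-- An ultrafilter in `E(S)`. -/
def IsUltraES (ξ : Set (Tr V A)) : Prop :=
  Λ.IsFilterES ξ ∧ ∀ ζ, Λ.IsFilterES ζ → ξ ⊆ ζ → ξ = ζ

/-- The character (indicator function) of a filter. -/
noncomputable def charOf (_Λ : LblSp V Ed A) (ξ : Set (Tr V A)) : Tr V A → Bool :=
  fun t => if t ∈ ξ then true else false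

/-- A character of `E(S)`: a nonzero, zero- and meet-preserving `{0,1}`-valued map on
`E(S)` (encoded as a map on triples vanishing outside `E(S)`). -/
def IsChar (φ : Tr V A → Bool) : Prop :=
  (∃ e, φ e = true) ∧ (∀ e, e ∉ Λ.ESet → φ e = false) ∧ φ Tr.zero = false ∧
  ∀ e ∈ Λ.ESet, ∀ f ∈ Λ.ESet, φ (Λ.tmul e f) = (φ e && φ f)

/-- The tight spectrum `Ê_tight`: the closure, within the space of characters with the
topology of pointwise convergence, of the set of characters of ultrafilters. -/
def tightSpectrum : Set (Tr V A → Bool) :=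
  {φ | Λ.IsChar φ} ∩ closure {φ | ∃ ξ, Λ.IsUltraES ξ ∧ φ = Λ.charOf ξ}

/-- A tight filter: a filter whose character lies in the tight spectrum. -/
def IsTightFilter (ξ : Set (Tr V A)) : Prop :=
  Λ.IsFilterES ξ ∧ Λ.charOf ξ ∈ Λ.tightSpectrum

/-- `ξ_{|β|} = {B : (β, B, β) ∈ ξ}`, the filter of `ξ` at level `β`. -/
def filterAt (_Λ : LblSp V Ed A) (ξ : Set (Tr V A)) (β : List A) : Set (Set V) :=
  {B | Tr.mk β B β ∈ ξ}

/-- `α` is the word associated with the filter `ξ` (i.e. `ξ = ξ^α`): the nonempty finite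
beginnings of `α` are exactly the words appearing in elements of `ξ`. -/
def HasWord (_Λ : LblSp V Ed A) (ξ : Set (Tr V A)) (α : Word A) : Prop :=
  ∀ β : List A, β ≠ [] → ((∃ B, Tr.mk β B β ∈ ξ) ↔ WPrefix β α)

/-! ## Filters and ultrafilters in `𝒜^β` -/

/-- A filter in the Boolean algebra `𝒜^β`. -/
def IsFilterAset (β : List A) (F : Set (Set V)) : Prop :=
  F.Nonempty ∧ F ⊆ Λ.Aset β ∧ (∀ X ∈ F, X.Nonempty) ∧
  (∀ X ∈ F, ∀ Y ∈ F, X ∩ Y ∈ F) ∧ (∀ X ∈ F, ∀ Y ∈ Λ.Aset β, X ⊆ Y → Y ∈ F)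

/-- An ultrafilter in `𝒜^β` (an element of `X_β`). -/
def IsUltraAset (β : List A) (F : Set (Set V)) : Prop :=
  Λ.IsFilterAset β F ∧ ∀ G, Λ.IsFilterAset β G → F ⊆ G → F = G

/-- The gluing map `g_{(α)β}(F) = {C ∩ r(αβ) : C ∈ F}` on ultrafilters. -/
noncomputable def gmap (α β : List A) (F : Set (Set V)) : Set (Set V) :=
  {X | ∃ C ∈ F, X = C ∩ Λ.rangeL (α ++ β)}

/-- The cutting map `h_{[α]β}(F) = {C ∈ 𝒜^β : D ⊆ C for some D ∈ F}` on ultrafilters. -/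
noncomputable def hmap (α β : List A) (F : Set (Set V)) : Set (Set V) :=
  {C | C ∈ Λ.Aset β ∧ ∃ D ∈ F, D ⊆ C}

/-! ## Cutting and gluing of (tight) filters in `E(S)` -/

/-- The cutting map `H_{[α]β} : T^{αβ} → T^{(α)β}` (word-free formulation): the filter
whose family is `η_n = h_{[α]β_{1,n}}(ξ_{n+|α|})`; `H_{[ω]β}` is the identity. -/
noncomputable def Hcut (α : List A) (ξ : Set (Tr V A)) : Set (Tr V A) :=
  if α = [] then ξ
  else {t | ∃ δ B, t = Tr.mk δ B δ ∧ B ∈ Λ.Aset δ ∧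
        ∃ D, Tr.mk (α ++ δ) D (α ++ δ) ∈ ξ ∧ D ⊆ B}

/-- The gluing map `G_{(α)β} : T^{(α)β} → T^{αβ}` (word-free formulation): the filter with
family `η_{|α|+n} = g_{(α)β_{1,n}}(ξ_n)` for `n ≥ 1` and `η_i = f_{α_{1,i}[…]}(…)` for
`i ≤ |α|`, with the two cases according to whether the word of `ξ` is empty (`β = ω`)
or not; `G_{(ω)β}` is the identity. -/
noncomputable def Gglue (α : List A) (ξ : Set (Tr V A)) : Set (Tr V A) :=
  if α = [] then ξ
  else if ∃ (δ : List A) (B : Set V), δ ≠ [] ∧ Tr.mk δ B δ ∈ ξ then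
    {t | ∃ δ B, t = Tr.mk δ B δ ∧
      ((α <+: δ ∧ α ≠ δ ∧ ∃ C, Tr.mk (δ.drop α.length) C (δ.drop α.length) ∈ ξ ∧
          B = C ∩ Λ.rangeL δ) ∨
       (δ <+: α ∧ B ∈ Λ.Aset δ ∧ ∃ (b : A) (C : Set V), Tr.mk [b] C [b] ∈ ξ ∧
          Λ.relRange B (α.drop δ.length ++ [b]) = C ∩ Λ.rangeL (α ++ [b])))}
  else
    {t | ∃ δ B, t = Tr.mk δ B δ ∧ δ <+: α ∧ B ∈ Λ.Aset δ ∧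
      ∃ C, Tr.mk [] C [] ∈ ξ ∧ Λ.relRange B (α.drop δ.length) = C ∩ Λ.rangeL α}

/-- `T^β`: the set of tight filters with associated word `β`. -/
def TWord (β : Word A) : Set (Set (Tr V A)) :=
  {ξ | Λ.IsTightFilter ξ ∧ Λ.HasWord ξ β}

/-- `T^{(α)β} = {ξ ∈ T^β : r(α) ∈ ξ_0}` (equal to `T^β` when `α = ω`), the domain of the
gluing map `G_{(α)β}`. -/
def TGlueDom (α : List A) (β : Word A) : Set (Set (Tr V A)) :=
  {ξ | Λ.IsTightFilter ξ ∧ Λ.HasWord ξ β ∧ (α ≠ [] → Tr.mk [] (Λ.rangeL α) [] ∈ ξ)}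

/-! ## The groupoid `Γ` -/

/-- The defining relation of
`Γ = {(ξ^{aγ}, |a|-|b|, η^{bγ}) ∈ T × ℤ × T : H_{[a]γ}(ξ^{aγ}) = H_{[b]γ}(η^{bγ})}`. -/
def InGamma (η : Set (Tr V A)) (m : ℤ) (ξ : Set (Tr V A)) : Prop :=
  ∃ (a b : List A) (γ : Word A), a ∈ Λ.LStar ∧ b ∈ Λ.LStar ∧ Λ.IsWordW γ ∧
    η ∈ Λ.TWord (wappend a γ) ∧ ξ ∈ Λ.TWord (wappend b γ) ∧
    m = (a.length : ℤ) - (b.length : ℤ) ∧ Λ.Hcut a η = Λ.Hcut b ξ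

/-- `Γ` as a set of raw triples. -/
def GammaRaw : Set (Set (Tr V A) × ℤ × Set (Tr V A)) :=
  {p | Λ.InGamma p.1 p.2.1 p.2.2}

/-- The basic set `Z_{s,e:e₁,…,eₙ}` of `Γ` (raw version), for `s = (μ, X, ν)`:
triples `(η^{μγ}, |μ|-|ν|, ξ^{νγ}) ∈ Γ` with `e ∈ ξ`, `eᵢ ∉ ξ` and
`H_{[μ]γ}(η) = H_{[ν]γ}(ξ)`. -/
noncomputable def ZrawGen (μ ν : List A) (e : Tr V A) (es : List (Tr V A)) :
    Set (Set (Tr V A) × ℤ × Set (Tr V A)) :=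
  {p | Λ.InGamma p.1 p.2.1 p.2.2 ∧ p.2.1 = (μ.length : ℤ) - (ν.length : ℤ) ∧
       e ∈ p.2.2 ∧ (∀ f ∈ es, f ∉ p.2.2) ∧
       ∃ γ : Word A, Λ.HasWord p.1 (wappend μ γ) ∧ Λ.HasWord p.2.2 (wappend ν γ) ∧
         Λ.Hcut μ p.1 = Λ.Hcut ν p.2.2}

/-- `Z_s = Z_{s, s*s}` for `s = (μ, X, ν)` (raw version). -/
noncomputable def Zraw (μ : List A) (X : Set V) (ν : List A) :
    Set (Set (Tr V A) × ℤ × Set (Tr V A)) :=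
  Λ.ZrawGen μ ν (Tr.mk ν X ν) []

/-- The basic set `V_{e:e₁,…,eₙ} = U_{e:e₁,…,eₙ} ∩ T` of the tight filter space
(raw version). -/
def VrawGen (e : Tr V A) (es : List (Tr V A)) : Set (Set (Tr V A)) :=
  {ξ | Λ.IsTightFilter ξ ∧ e ∈ ξ ∧ ∀ f ∈ es, f ∉ ξ}

/-- The shift map `σ : T^{(1)} → T`, `σ(ξ^{aγ}) = H_{[a]γ}(ξ^{aγ})` (extended by the
identity off its domain). -/
noncomputable def sigmaMap (ξ : Set (Tr V A)) : Set (Tr V A) :=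
  if h : ∃ a : A, ∃ B : Set V, Tr.mk [a] B [a] ∈ ξ then Λ.Hcut [h.choose] ξ else ξ

/-- The Renault–Deaconu basic set
`𝒱(X, Y, m, n) = {(η, m-n, ξ) ∈ Γ : (η, ξ) ∈ X × Y, σ^m(η) = σ^n(ξ)}` (raw version). -/
noncomputable def VrdRaw (Xs Ys : Set (Set (Tr V A))) (m n : ℕ) :
    Set (Set (Tr V A) × ℤ × Set (Tr V A)) :=
  {p | Λ.InGamma p.1 p.2.1 p.2.2 ∧ p.2.1 = (m : ℤ) - (n : ℤ) ∧
       p.1 ∈ Xs ∧ p.2.2 ∈ Ys ∧ (Λ.sigmaMap)^[m] p.1 = (Λ.sigmaMap)^[n] p.2.2}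

/-! ## The groupoid of germs `𝒢_tight` -/

/-- The action `θ_s(φ)(e) = φ(s* e s)` of `S` on characters. -/
noncomputable def theta (s : Tr V A) (φ : Tr V A → Bool) : Tr V A → Bool :=
  fun e => if e ∈ Λ.ESet then φ (Λ.tmul (Λ.tmul (Tr.tstar s) e) s) else false

/-- `Ω = {(s, φ) ∈ S × Ê_tight : φ ∈ D_{s*s}}`. -/
noncomputable def Omega : Set (Tr V A × (Tr V A → Bool)) :=
  {p | p.1 ∈ Λ.SSet ∧ p.2 ∈ Λ.tightSpectrum ∧ p.2 (Λ.tmul (Tr.tstar p.1) p.1) = true}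

/-- The germ equivalence relation on `Ω`: `(s,φ) ∼ (t,ψ)` iff `φ = ψ` and there is
`e ∈ E(S)` with `φ(e) = 1` and `se = te`. -/
noncomputable def germEquiv (p q : Tr V A × (Tr V A → Bool)) : Prop :=
  p.2 = q.2 ∧ ∃ e ∈ Λ.ESet, p.2 e = true ∧ Λ.tmul p.1 e = Λ.tmul q.1 e

/-- The map `Φ` at the level of `Ω`: for `t = (β, X, γ)` and `φ` with filter `ξ^α`
(where `α = γα'`), `Φ[t,φ] = ((G_{(β)α'} ∘ H_{[γ]α'})(ξ^α), |β|-|γ|, ξ^α)`. -/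
noncomputable def PhiRaw : Tr V A → (Tr V A → Bool) → Set (Tr V A) × ℤ × Set (Tr V A)
  | Tr.zero, _ => (∅, 0, ∅)
  | Tr.mk β _ γ, φ =>
      (Λ.Gglue β (Λ.Hcut γ {e | φ e = true}), (β.length : ℤ) - (γ.length : ℤ),
        {e | φ e = true})

/-! ## Miscellaneous notions -/

/-- `ℒ(XE¹) = {ℒ(e) : e ∈ E¹, s(e) ∈ X}`. -/
def labE (X : Set V) : Set A := {a | ∃ e, Λ.lab e = a ∧ Λ.src e ∈ X}

/-- The set `E⁰_sink` of sinks. -/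
def sinks : Set V := {v | ∀ e, Λ.src e ≠ v}

/-- The filter in `E(S)` associated with a pair (word, complete family). -/
def pairFilter (_Λ : LblSp V Ed A) (α : Word A) (F : ℕ → Set (Set V)) : Set (Tr V A) :=
  {t | ∃ (n : ℕ) (B : Set V), (n : ℕ∞) ≤ wlength α ∧ B ∈ F n ∧
    t = Tr.mk (wprefix α n) B (wprefix α n)}

/-- A complete family for the word `α`: `F n` is a filter in `𝒜^{α_{1,n}}` for
`1 ≤ n ≤ |α|` (`F 0` is a filter in `𝒜` or empty, and a filter if `α = ω`), and
`F n = {X ∈ 𝒜^{α_{1,n}} : r(X, α_{n+1}) ∈ F (n+1)}` for all `n < |α|`. -/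
noncomputable def IsCompleteFamily (α : Word A) (F : ℕ → Set (Set V)) : Prop :=
  Λ.IsWordW α ∧
  (∀ n : ℕ, 1 ≤ n → (n : ℕ∞) ≤ wlength α → Λ.IsFilterAset (wprefix α n) (F n)) ∧
  (F 0 = ∅ ∨ Λ.IsFilterAset [] (F 0)) ∧
  (wlength α = 0 → Λ.IsFilterAset [] (F 0)) ∧
  (∀ n : ℕ, ((n + 1 : ℕ) : ℕ∞) ≤ wlength α →
    F n = {X | X ∈ Λ.Aset (wprefix α n) ∧
      Λ.relRange X ((wprefix α (n + 1)).drop n) ∈ F (n + 1)})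

/-! ## The tight filter space `T` and the groupoid `Γ` as types -/

/-- The space `T` of tight filters. -/
structure TightT where
  carrier : Set (Tr V A)
  tight : Λ.IsTightFilter carrier

/-- The topology of `T`, induced from pointwise convergence of characters. -/
noncomputable instance : TopologicalSpace Λ.TightT :=
  TopologicalSpace.induced (fun ξ => Λ.charOf ξ.carrier) inferInstance

/-- The groupoid `Γ ⊆ T × ℤ × T` as a type. -/
structure GammaT where
  fst : Λ.TightT
  mid : ℤ
  lst : Λ.TightT
  mem : Λ.InGamma fst.carrier mid lst.carrier

/-- The raw triple underlying an element of `Γ`. -/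
def rawOf (p : Λ.GammaT) : Set (Tr V A) × ℤ × Set (Tr V A) :=
  (p.fst.carrier, p.mid, p.lst.carrier)

/-- The collection of all sets `Z_{s,e:e₁,…,eₙ}` (for `s ∈ S`, `e, eᵢ ∈ E(S)`),
as subsets of `Γ`. -/
noncomputable def ZBasisT : Set (Set Λ.GammaT) :=
  {Z | ∃ (μ : List A) (X : Set V) (ν : List A) (e : Tr V A) (es : List (Tr V A)),
    Tr.mk μ X ν ∈ Λ.SSet ∧ e ∈ Λ.ESet ∧ (∀ f ∈ es, f ∈ Λ.ESet) ∧
    Z = {p : Λ.GammaT | Λ.rawOf p ∈ Λ.ZrawGen μ ν e es}}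

/-- The topology on `Γ` induced by the isomorphism `Φ` from the germ topology of
`𝒢_tight`, generated by the images of the basic sets `Θ(s, 𝒰)` with `𝒰 ⊆ D_{s*s}`
open in the tight spectrum. -/
noncomputable def PhiTopology : TopologicalSpace Λ.GammaT :=
  TopologicalSpace.generateFrom
    {Z | ∃ (s : Tr V A) (U : Set (Tr V A → Bool)), s ∈ Λ.SSet ∧
      (∃ W, IsOpen W ∧ U = W ∩ Λ.tightSpectrum) ∧
      (∀ φ ∈ U, φ (Λ.tmul (Tr.tstar s) s) = true) ∧
      Z = {p : Λ.GammaT | ∃ φ ∈ U, (s, φ) ∈ Λ.Omega ∧ Λ.PhiRaw s φ = Λ.rawOf p}}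

end LblSp

/-!
A basic set `Z_{(μ,X,ν), e:e₁,…,eₙ}` is itself a Renault–Deaconu set: it is
`𝒱(C_μ, C_ν ∩ V_{e:e₁,…,eₙ}, |μ|, |ν|)`, where the cylinder `C_μ` of tight filters whose word
begins with `μ` is open and `σ^{|μ|} = H_{[μ]}` is injective on it (by the argument below
with `ν = μ`).

Conversely, let `(η, |μ| - |ν|, ξ) ∈ 𝒱(X, Y, |μ|, |ν|)`, so that `H_{[μ]}(η) = H_{[ν]}(ξ)`.
Near `η` and `ξ` the open sets `X` and `Y` are cut out by finitely many idempotents. Because of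
the equation `H_{[μ]}(η) = H_{[ν]}(ξ)`, each condition `(μδ, B, μδ) ∈ η` is equivalent to the
condition `(νδ, r(νδ) ∖ (r(μδ) ∖ B), νδ) ∈ ξ`, and normality puts this set in `𝒜`; conditions
at shorter levels `β` (with `μ = ββ'`) are first moved up to level `μ` through `r(B, β')`.
So finitely many conditions on `ξ` alone control membership in `X × Y`: the positive ones are
absorbed into a single idempotent `e ∈ ξ`, the negative ones become `e₁, …, eₙ`, and the
resulting basic set `Z` is a neighbourhood of the point inside `𝒱(X, Y, |μ|, |ν|)`.
-/

section Words

variable {A : Type w}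

theorem wappend_nil (γ : Word A) : wappend [] γ = γ := by
  cases γ <;> simp [wappend]

theorem wappend_append (a b : List A) (γ : Word A) :
    wappend (a ++ b) γ = wappend a (wappend b γ) := by
  cases γ with
  | inl l => simp [wappend]
  | inr f =>
    simp only [wappend, Sum.elim_inr, Sum.inr.injEq, List.length_append, List.get_eq_getElem]
    funext n
    by_cases h1 : n < a.length
    · rw [dif_pos (by omega), dif_pos h1, List.getElem_append_left h1]
    · rw [dif_neg h1]
      by_cases h2 : n < a.length + b.length
      · rw [dif_pos h2, dif_pos (by omega), List.getElem_append_right (by omega)]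
      · rw [dif_neg h2, dif_neg (by omega), Nat.sub_sub]

theorem wPrefix_inr_iff {β : List A} {f : ℕ → A} :
    WPrefix β (Sum.inr f) ↔ ∀ i (h : i < β.length), β[i] = f i := by
  refine ⟨fun h i hi => ?_, fun h => List.ext_getElem (by simp) fun i h1 _ => by simp [h i h1]⟩
  rw [List.getElem_of_eq h hi]
  simp

theorem wPrefix_nil (α : Word A) : WPrefix [] α := by
  cases α with
  | inl l => exact List.nil_prefix
  | inr f => simp [wPrefix_inr_iff]

theorem wPrefix_ofFn (f : ℕ → A) (n : ℕ) :
    WPrefix (List.ofFn fun i : Fin n => f i) (Sum.inr f) := by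
  simp [wPrefix_inr_iff]

theorem wPrefix_append_wappend_iff {μ δ : List A} {γ : Word A} :
    WPrefix (μ ++ δ) (wappend μ γ) ↔ WPrefix δ γ := by
  cases γ with
  | inl l => exact List.prefix_append_right_inj μ
  | inr f =>
    simp only [wappend, Sum.elim_inr, wPrefix_inr_iff, List.length_append, List.get_eq_getElem]
    constructor
    · intro h i hi
      simpa [List.getElem_append_right] using h (μ.length + i) (by omega)
    · intro h i hi
      rcases lt_or_ge i μ.length with h2 | h2
      · rw [List.getElem_append_left h2, dif_pos h2]
      · rw [List.getElem_append_right h2, dif_neg (by omega)]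
        exact h (i - μ.length) (by omega)

theorem wPrefix_wappend_self (μ : List A) (γ : Word A) : WPrefix μ (wappend μ γ) := by
  simpa using (wPrefix_append_wappend_iff (δ := []) (γ := γ)).mpr (wPrefix_nil γ)

theorem WPrefix.of_prefix {β' β : List A} {α : Word A} (h : β' <+: β) (h2 : WPrefix β α) :
    WPrefix β' α := by
  cases α with
  | inl l => exact h.trans h2
  | inr f =>
    rw [wPrefix_inr_iff] at h2 ⊢
    intro i hi
    rw [h.getElem hi]
    exact h2 i (hi.trans_le h.length_le)

theorem WPrefix.exists_wappend {μ : List A} {α : Word A} (h : WPrefix μ α) :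
    ∃ γ, α = wappend μ γ := by
  cases α with
  | inl l =>
    obtain ⟨t, rfl⟩ : μ <+: l := h
    exact ⟨Sum.inl t, rfl⟩
  | inr f =>
    rw [wPrefix_inr_iff] at h
    refine ⟨Sum.inr fun n => f (n + μ.length), ?_⟩
    simp only [wappend, Sum.elim_inr, Sum.inr.injEq, List.get_eq_getElem]
    funext n
    rcases lt_or_ge n μ.length with h2 | h2
    · rw [dif_pos h2, h n h2]
    · rw [dif_neg (by omega), Nat.sub_add_cancel h2]

theorem WPrefix.prefix_of_length_le {β δ : List A} {α : Word A} (hβ : WPrefix β α)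
    (hδ : WPrefix δ α) (hle : β.length ≤ δ.length) : β <+: δ := by
  cases α with
  | inl l => exact List.prefix_of_prefix_length_le hβ hδ hle
  | inr f =>
    rw [wPrefix_inr_iff] at hβ hδ
    exact List.prefix_iff_getElem.mpr ⟨hle, fun i hi => by rw [hβ i hi, hδ i (by omega)]⟩

theorem WPrefix.prefix_or_prefix {β δ : List A} {α : Word A} (hβ : WPrefix β α)
    (hδ : WPrefix δ α) : β <+: δ ∨ δ <+: β :=
  (le_total β.length δ.length).imp (hβ.prefix_of_length_le hδ) (hδ.prefix_of_length_le hβ)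

theorem Word.ext_wPrefix {α α' : Word A}
    (h : ∀ β : List A, β ≠ [] → (WPrefix β α ↔ WPrefix β α')) : α = α' := by
  have hlist : ∀ l l' : List A, (∀ β : List A, β ≠ [] → (β <+: l ↔ β <+: l')) → l <+: l' :=
    fun l l' h => by
      rcases eq_or_ne l [] with rfl | hl
      · exact List.nil_prefix
      · exact (h l hl).mp (List.prefix_refl l)
  have hfin : ∀ (l : List A) (f : ℕ → A), ¬∀ β : List A, β ≠ [] → (WPrefix β (Sum.inr f) →
      WPrefix β (Sum.inl l)) := fun l f h => by
    have hpre : _ <+: l := h _ (by simp) (wPrefix_ofFn f (l.length + 1))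
    simpa using hpre.length_le
  rcases α with l | f <;> rcases α' with l' | f'
  · exact congrArg Sum.inl <| (hlist l l' h).eq_of_length_le
      (hlist l' l fun β hβ => (h β hβ).symm).length_le
  · exact absurd (fun β hβ => (h β hβ).mpr) (hfin l f')
  · exact absurd (fun β hβ => (h β hβ).mp) (hfin l' f)
  · refine congrArg Sum.inr (funext fun n => ?_)
    have hn := (h _ (by simp)).mp (wPrefix_ofFn f (n + 1))
    have := (wPrefix_inr_iff.mp hn) n (by simp)
    rwa [List.getElem_ofFn] at this

theorem exists_word_of_prefix_chain {P : Set (List A)} (hne : P.Nonempty)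
    (hchain : ∀ β ∈ P, ∀ δ ∈ P, β <+: δ ∨ δ <+: β)
    (hpfx : ∀ δ ∈ P, ∀ β, β <+: δ → β ≠ [] → β ∈ P) :
    ∃ α : Word A, ∀ β : List A, β ≠ [] → (β ∈ P ↔ WPrefix β α) := by
  by_cases hbd : ∃ δ ∈ P, ∀ β ∈ P, β.length ≤ δ.length
  · obtain ⟨δ, hδP, hδmax⟩ := hbd
    refine ⟨Sum.inl δ, fun β hβ => ⟨fun hβP => ?_, fun h => hpfx δ hδP β h hβ⟩⟩
    rcases hchain β hβP δ hδP with h | h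
    · exact h
    · exact (h.eq_of_length_le (hδmax β hβP)).symm ▸ List.prefix_refl δ
  · push Not at hbd
    have long : ∀ n : ℕ, ∃ δ ∈ P, n < δ.length := by
      intro n
      induction n with
      | zero =>
        obtain ⟨δ, hδ, hlt⟩ := hbd _ hne.some_mem
        exact ⟨δ, hδ, by omega⟩
      | succ k ih =>
        obtain ⟨δ, hδ, hlt⟩ := ih
        obtain ⟨δ', hδ', hlt'⟩ := hbd δ hδ
        exact ⟨δ', hδ', by omega⟩
    choose D hDP hDlen using long
    have agree : ∀ β ∈ P, ∀ i (h : i < β.length), β[i] = (D i)[i]'(hDlen i) := by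
      intro β hβ i h
      rcases hchain β hβ (D i) (hDP i) with hc | hc
      · exact hc.getElem h
      · exact (hc.getElem (hDlen i)).symm
    refine ⟨Sum.inr fun n => (D n)[n]'(hDlen n), fun β hβ => ?_⟩
    rw [wPrefix_inr_iff]
    refine ⟨agree β, fun h => hpfx (D β.length) (hDP _) β ?_ hβ⟩
    refine List.prefix_iff_getElem.mpr ⟨(hDlen β.length).le, fun i hi => ?_⟩
    rw [h i hi, agree (D β.length) (hDP _) i (hi.trans (hDlen β.length))]

theorem wprefix_length {α : Word A} {m : ℕ} (h : (m : ℕ∞) ≤ wlength α) :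
    (wprefix α m).length = m := by
  cases α with
  | inl l => simpa [wprefix] using (Nat.cast_le.mp h : m ≤ l.length)
  | inr f => simp [wprefix]

theorem exists_wappend_wprefix {α : Word A} {m : ℕ} (h : (m : ℕ∞) ≤ wlength α) :
    ∃ γ, α = wappend (wprefix α m) γ := by
  refine WPrefix.exists_wappend ?_
  cases α with
  | inl l => exact List.take_prefix m l
  | inr f => exact wPrefix_ofFn f m

theorem length_le_wlength_wappend (μ : List A) (γ : Word A) :
    (μ.length : ℕ∞) ≤ wlength (wappend μ γ) := by
  cases γ <;> simp [wappend, wlength]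

end Words

namespace LblSp

variable {V : Type u} {Ed : Type v} {A : Type w}

section Graph

variable (Λ : LblSp V Ed A)

@[simp] theorem relRange_nil (X : Set V) : Λ.relRange X [] = X := if_pos rfl

@[simp] theorem rangeL_nil : Λ.rangeL [] = Set.univ := Λ.relRange_nil Set.univ

theorem mem_relRange_iff {α : List A} (hα : α ≠ []) {X : Set V} {v : V} :
    v ∈ Λ.relRange X α ↔ ∃ (l : List Ed) (h : l ≠ []),
      List.IsChain (fun e f => Λ.rng e = Λ.src f) l ∧ l.map Λ.lab = α ∧
        Λ.src (l.head h) ∈ X ∧ Λ.rng (l.getLast h) = v := by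
  rw [relRange, if_neg hα]; rfl

theorem relRange_mono {X Y : Set V} (h : X ⊆ Y) (α : List A) :
    Λ.relRange X α ⊆ Λ.relRange Y α := by
  rcases eq_or_ne α [] with rfl | hα
  · simpa using h
  · rintro v hv
    obtain ⟨l, hl, hch, hmap, hsrc, hlast⟩ := (Λ.mem_relRange_iff hα).mp hv
    exact (Λ.mem_relRange_iff hα).mpr ⟨l, hl, hch, hmap, h hsrc, hlast⟩

theorem nonempty_of_relRange_nonempty {X : Set V} {α : List A}
    (h : (Λ.relRange X α).Nonempty) : X.Nonempty := by
  rcases eq_or_ne α [] with rfl | hα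
  · simpa using h
  · obtain ⟨v, hv⟩ := h
    obtain ⟨l, hl, -, -, hsrc, -⟩ := (Λ.mem_relRange_iff hα).mp hv
    exact ⟨_, hsrc⟩

theorem relRange_append (X : Set V) (α β : List A) :
    Λ.relRange X (α ++ β) = Λ.relRange (Λ.relRange X α) β := by
  rcases eq_or_ne α [] with rfl | hα
  · simp
  rcases eq_or_ne β [] with rfl | hβ
  · simp
  ext v
  rw [Λ.mem_relRange_iff (by simp [hα]), Λ.mem_relRange_iff hβ]
  constructor
  · rintro ⟨l, hl, hch, hmap, hsrc, rfl⟩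
    obtain ⟨l₁, l₂, rfl, hmap₁, hmap₂⟩ := List.map_eq_append_iff.mp hmap
    have hl₁ : l₁ ≠ [] := by rintro rfl; exact hα hmap₁.symm
    have hl₂ : l₂ ≠ [] := by rintro rfl; exact hβ hmap₂.symm
    obtain ⟨hch₁, hch₂, hlink⟩ := List.isChain_append.mp hch
    refine ⟨l₂, hl₂, hch₂, hmap₂, ?_, by rw [List.getLast_append_of_ne_nil _ hl₂]⟩
    rw [← hlink _ (List.getLast?_eq_some_getLast hl₁) _ (List.head?_eq_some_head hl₂)]
    exact (Λ.mem_relRange_iff hα).mpr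
      ⟨l₁, hl₁, hch₁, hmap₁, by rwa [← List.head_append_of_ne_nil hl₁], rfl⟩
  · rintro ⟨l₂, hl₂, hch₂, hmap₂, hsrc₂, rfl⟩
    obtain ⟨l₁, hl₁, hch₁, hmap₁, hsrc₁, hlast₁⟩ := (Λ.mem_relRange_iff hα).mp hsrc₂
    refine ⟨l₁ ++ l₂, by simp [hl₁], ?_, by rw [List.map_append, hmap₁, hmap₂], ?_,
      by rw [List.getLast_append_of_ne_nil _ hl₂]⟩
    · refine List.isChain_append.mpr ⟨hch₁, hch₂, fun x hx y hy => ?_⟩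
      rw [List.getLast?_eq_some_getLast hl₁, Option.mem_some_iff] at hx
      rw [List.head?_eq_some_head hl₂, Option.mem_some_iff] at hy
      rw [← hx, ← hy, hlast₁]
    · rwa [List.head_append_of_ne_nil hl₁]

theorem rangeL_append (α β : List A) :
    Λ.rangeL (α ++ β) = Λ.relRange (Λ.rangeL α) β :=
  Λ.relRange_append Set.univ α β

theorem relRange_subset_rangeL_append {X : Set V} {α : List A} (h : X ⊆ Λ.rangeL α)
    (β : List A) : Λ.relRange X β ⊆ Λ.rangeL (α ++ β) := by
  rw [rangeL_append]
  exact Λ.relRange_mono h β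

theorem rangeL_append_subset (α β : List A) : Λ.rangeL (α ++ β) ⊆ Λ.rangeL β := by
  rw [rangeL_append]
  exact Λ.relRange_mono (Set.subset_univ _) β

theorem nil_mem_LStar : ([] : List A) ∈ Λ.LStar := Or.inl rfl

theorem mem_LStar_of_append {α β : List A} (h : α ++ β ∈ Λ.LStar) :
    α ∈ Λ.LStar ∧ β ∈ Λ.LStar := by
  rcases h with h | ⟨l, -, hch, hmap⟩
  · rw [List.append_eq_nil_iff] at h
    exact ⟨Or.inl h.1, Or.inl h.2⟩
  obtain ⟨l₁, l₂, rfl, hmap₁, hmap₂⟩ := List.map_eq_append_iff.mp hmap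
  obtain ⟨hch₁, hch₂, -⟩ := List.isChain_append.mp hch
  have label : ∀ l' : List Ed, List.IsChain (fun e f => Λ.rng e = Λ.src f) l' →
      l'.map Λ.lab ∈ Λ.LStar := fun l' hch' => by
    rcases eq_or_ne l' [] with rfl | hl'
    · exact Λ.nil_mem_LStar
    · exact Or.inr ⟨l', hl', hch', rfl⟩
  exact ⟨hmap₁ ▸ label l₁ hch₁, hmap₂ ▸ label l₂ hch₂⟩

end Graph

section Semigroup

variable {Λ : LblSp V Ed A}

theorem mk_mem_ESet {α : List A} {X : Set V} :
    Tr.mk α X α ∈ Λ.ESet ↔ α ∈ Λ.LStar ∧ X ∈ Λ.Aset α ∧ X.Nonempty := by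
  constructor
  · rintro (h | ⟨β, Y, h, hβ, hY, hne⟩)
    · cases h
    · cases h
      exact ⟨hβ, hY, hne⟩
  · rintro ⟨hα, hX, hne⟩
    exact Or.inr ⟨α, X, rfl, hα, hX, hne⟩

variable (Λ)

theorem tmul_mk_same (α : List A) (X Y : Set V) :
    Λ.tmul (Tr.mk α X α) (Tr.mk α Y α) =
      if (X ∩ Y).Nonempty then Tr.mk α (X ∩ Y) α else Tr.zero := by
  simp only [tmul, List.drop_length, relRange_nil, List.append_nil, List.prefix_refl, true_and]
  split_ifs <;> rfl

theorem not_append_prefix_self {α β : List A} (hβ : β ≠ []) : ¬(α ++ β <+: α) := fun h => by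
  simpa [hβ] using h.length_le

theorem tmul_mk_mk_append {β : List A} (hβ : β ≠ []) (α : List A) (X Y : Set V) :
    Λ.tmul (Tr.mk α X α) (Tr.mk (α ++ β) Y (α ++ β)) =
      if (Λ.relRange X β ∩ Y).Nonempty then Tr.mk (α ++ β) (Λ.relRange X β ∩ Y) (α ++ β)
      else Tr.zero := by
  simp only [tmul, List.drop_left, List.prefix_append, true_and]
  split_ifs with h h' <;> first | rfl | exact absurd h'.1 (not_append_prefix_self hβ)

theorem tmul_mk_append_mk {β : List A} (hβ : β ≠ []) (α : List A) (X Y : Set V) :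
    Λ.tmul (Tr.mk (α ++ β) X (α ++ β)) (Tr.mk α Y α) =
      if (X ∩ Λ.relRange Y β).Nonempty then Tr.mk (α ++ β) (X ∩ Λ.relRange Y β) (α ++ β)
      else Tr.zero := by
  simp only [tmul, List.drop_left, List.prefix_append, true_and]
  rw [if_neg fun h => not_append_prefix_self hβ h.1]

end Semigroup

section Filters

variable {Λ : LblSp V Ed A} {ξ : Set (Tr V A)}

theorem IsFilterES.exists_eq_mk (hF : Λ.IsFilterES ξ) {t : Tr V A} (ht : t ∈ ξ) :
    ∃ α B, t = Tr.mk α B α ∧ α ∈ Λ.LStar ∧ B ∈ Λ.Aset α ∧ B.Nonempty := by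
  obtain ⟨hE | ⟨α, B, rfl, hα, hB, hne⟩, hnz⟩ := hF.2.1 t ht
  · exact absurd hE hnz
  · exact ⟨α, B, rfl, hα, hB, hne⟩

theorem IsFilterES.mk_mem (hF : Λ.IsFilterES ξ) {α : List A} {B : Set V} (h : Tr.mk α B α ∈ ξ) :
    α ∈ Λ.LStar ∧ B ∈ Λ.Aset α ∧ B.Nonempty :=
  mk_mem_ESet.mp (hF.2.1 _ h).1

theorem IsFilterES.zero_not_mem (hF : Λ.IsFilterES ξ) : Tr.zero ∉ ξ := fun h => (hF.2.1 _ h).2 rfl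

theorem IsFilterES.inter_mem (hF : Λ.IsFilterES ξ) {α : List A} {X Y : Set V} (hX : Tr.mk α X α ∈ ξ)
    (hY : Tr.mk α Y α ∈ ξ) : Tr.mk α (X ∩ Y) α ∈ ξ := by
  have h := hF.2.2.1 _ hX _ hY
  rw [tmul_mk_same] at h
  split_ifs at h
  · exact h
  · exact absurd h hF.zero_not_mem

theorem IsFilterES.mem_of_subset (hF : Λ.IsFilterES ξ) {α : List A} {D B : Set V}
    (hD : Tr.mk α D α ∈ ξ) (hDB : D ⊆ B) (hB : B ∈ Λ.Aset α) : Tr.mk α B α ∈ ξ := by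
  obtain ⟨hα, -, hDne⟩ := hF.mk_mem hD
  refine hF.2.2.2 _ hD _ (mk_mem_ESet.mpr ⟨hα, hB, hDne.mono hDB⟩) ?_
  rw [tmul_mk_same, Set.inter_eq_left.mpr hDB, if_pos hDne]

theorem IsFilterES.prefix_or_prefix (hF : Λ.IsFilterES ξ) {β δ : List A} {B C : Set V}
    (hB : Tr.mk β B β ∈ ξ) (hC : Tr.mk δ C δ ∈ ξ) : β <+: δ ∨ δ <+: β := by
  by_contra! h
  have hm := hF.2.2.1 _ hB _ hC
  simp only [tmul, h.1, h.2, false_and, if_false] at hm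
  exact hF.zero_not_mem hm

theorem IsFilterES.rangeL_mem_of_append_mem (hF : Λ.IsFilterES ξ) (hLS : Λ.IsLS)
    {α β : List A} {C : Set V} (hC : Tr.mk (α ++ β) C (α ++ β) ∈ ξ) (hα : α ≠ []) :
    Tr.mk α (Λ.rangeL α) α ∈ ξ := by
  obtain ⟨hαβ, ⟨-, hCr⟩, hCne⟩ := hF.mk_mem hC
  have hαL := (Λ.mem_LStar_of_append hαβ).1
  rw [rangeL_append] at hCr
  refine hF.2.2.2 _ hC _ (mk_mem_ESet.mpr ⟨hαL, ⟨hLS.range_mem α hαL hα, subset_rfl⟩,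
    Λ.nonempty_of_relRange_nonempty (hCne.mono hCr)⟩) ?_
  rcases eq_or_ne β [] with rfl | hβ
  · simp only [List.append_nil, relRange_nil] at hCr ⊢
    rw [tmul_mk_same, Set.inter_eq_left.mpr hCr, if_pos hCne]
  · rw [tmul_mk_append_mk Λ hβ, Set.inter_eq_left.mpr hCr, if_pos hCne]

theorem IsFilterES.exists_mk_mem_of_prefix (hF : Λ.IsFilterES ξ) (hLS : Λ.IsLS)
    {β δ : List A} {C : Set V} (hC : Tr.mk δ C δ ∈ ξ) (hβδ : β <+: δ) (hβ : β ≠ []) :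
    ∃ B, Tr.mk β B β ∈ ξ := by
  obtain ⟨γ, rfl⟩ := hβδ
  exact ⟨_, hF.rangeL_mem_of_append_mem hLS hC hβ⟩

theorem IsFilterES.mk_mem_iff_relRange_mem (hF : Λ.IsFilterES ξ) (hLS : Λ.IsLS)
    {α β : List A} {C : Set V} (hC : Tr.mk (α ++ β) C (α ++ β) ∈ ξ) {B : Set V}
    (hB : B ∈ Λ.Aset α) :
    Tr.mk α B α ∈ ξ ↔ Tr.mk (α ++ β) (Λ.relRange B β) (α ++ β) ∈ ξ := by
  rcases eq_or_ne β [] with rfl | hβ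
  · simp
  obtain ⟨hαβ, -, -⟩ := hF.mk_mem hC
  constructor
  · intro hαB
    have h := hF.2.2.1 _ hαB _ hC
    rw [tmul_mk_mk_append Λ hβ] at h
    split_ifs at h
    · exact hF.mem_of_subset h Set.inter_subset_left
        ⟨hLS.relRange_mem B hB.1 β (Λ.mem_LStar_of_append hαβ).2,
          Λ.relRange_subset_rangeL_append hB.2 β⟩
    · exact absurd h hF.zero_not_mem
  · intro h
    have hne := (hF.mk_mem h).2.2
    refine hF.2.2.2 _ h _ (mk_mem_ESet.mpr ⟨(Λ.mem_LStar_of_append hαβ).1, hB,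
      Λ.nonempty_of_relRange_nonempty hne⟩) ?_
    rw [tmul_mk_append_mk Λ hβ, Set.inter_self, if_pos hne]

theorem IsFilterES.exists_hasWord (hF : Λ.IsFilterES ξ) (hLS : Λ.IsLS) :
    ∃ α : Word A, Λ.HasWord ξ α := by
  have hne : {β : List A | ∃ B, Tr.mk β B β ∈ ξ}.Nonempty := by
    obtain ⟨t, ht⟩ := hF.1
    obtain ⟨β, B, rfl, -⟩ := hF.exists_eq_mk ht
    exact ⟨β, B, ht⟩
  exact exists_word_of_prefix_chain hne (fun β ⟨_, hB⟩ δ ⟨_, hC⟩ => hF.prefix_or_prefix hB hC)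
    fun δ ⟨_, hC⟩ β hβδ hβ => hF.exists_mk_mem_of_prefix hLS hC hβδ hβ

theorem HasWord.unique {α α' : Word A} (h : Λ.HasWord ξ α) (h' : Λ.HasWord ξ α') : α = α' :=
  Word.ext_wPrefix fun β hβ => (h β hβ).symm.trans (h' β hβ)

theorem IsFilterES.exists_mem_imp_mem_mk_append (hF : Λ.IsFilterES ξ) (hLS : Λ.IsLS) {α β : List A}
    {B C : Set V} (hB : Tr.mk α B α ∈ ξ) (hC : Tr.mk (α ++ β) C (α ++ β) ∈ ξ) :
    ∃ e ∈ ξ, ∀ ζ, Λ.IsFilterES ζ → e ∈ ζ →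
      Tr.mk α B α ∈ ζ ∧ Tr.mk (α ++ β) C (α ++ β) ∈ ζ := by
  obtain ⟨hαβ, hCA, -⟩ := hF.mk_mem hC
  obtain ⟨-, hBA, -⟩ := hF.mk_mem hB
  have hBβ : Λ.relRange B β ∈ Λ.Aset (α ++ β) :=
    ⟨hLS.relRange_mem B hBA.1 β (Λ.mem_LStar_of_append hαβ).2,
      Λ.relRange_subset_rangeL_append hBA.2 β⟩
  refine ⟨_, hF.inter_mem ((hF.mk_mem_iff_relRange_mem hLS hC hBA).mp hB) hC,
    fun ζ hζ he => ?_⟩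
  have hζβ := hζ.mem_of_subset he Set.inter_subset_left hBβ
  exact ⟨(hζ.mk_mem_iff_relRange_mem hLS hζβ hBA).mpr hζβ,
    hζ.mem_of_subset he Set.inter_subset_right hCA⟩

theorem IsFilterES.exists_mem_imp_mem_and_mem (hF : Λ.IsFilterES ξ) (hLS : Λ.IsLS) {s t : Tr V A}
    (hs : s ∈ ξ) (ht : t ∈ ξ) : ∃ e ∈ ξ, ∀ ζ, Λ.IsFilterES ζ → e ∈ ζ → s ∈ ζ ∧ t ∈ ζ := by
  obtain ⟨β, B, rfl, -⟩ := hF.exists_eq_mk hs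
  obtain ⟨δ, C, rfl, -⟩ := hF.exists_eq_mk ht
  rcases hF.prefix_or_prefix hs ht with ⟨γ, rfl⟩ | ⟨γ, rfl⟩
  · exact hF.exists_mem_imp_mem_mk_append hLS hs ht
  · obtain ⟨e, he, hζ⟩ := hF.exists_mem_imp_mem_mk_append hLS ht hs
    exact ⟨e, he, fun ζ hFζ heζ => (hζ ζ hFζ heζ).symm⟩

theorem IsFilterES.exists_mem_imp_subset (hF : Λ.IsFilterES ξ) (hLS : Λ.IsLS) (s : Finset (Tr V A))
    (hs : ↑s ⊆ ξ) : ∃ e ∈ ξ, ∀ ζ, Λ.IsFilterES ζ → e ∈ ζ → ↑s ⊆ ζ := by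
  induction s using Finset.induction_on with
  | empty =>
    obtain ⟨e, he⟩ := hF.1
    exact ⟨e, he, fun _ _ _ => by simp⟩
  | insert t s _ ih =>
    rw [Finset.coe_insert, Set.insert_subset_iff] at hs
    obtain ⟨e', he', hζ'⟩ := ih hs.2
    obtain ⟨e, he, hζ⟩ := hF.exists_mem_imp_mem_and_mem hLS hs.1 he'
    refine ⟨e, he, fun ζ hFζ heζ => ?_⟩
    rw [Finset.coe_insert, Set.insert_subset_iff]
    exact ⟨(hζ ζ hFζ heζ).1, hζ' ζ hFζ (hζ ζ hFζ heζ).2⟩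

theorem IsFilterES.exists_mem_forall_mem_iff (hF : Λ.IsFilterES ξ) (hLS : Λ.IsLS)
    (J : Finset (Tr V A)) : ∃ e ∈ ξ, ∃ es : List (Tr V A), (∀ f ∈ es, f ∈ Λ.ESet ∧ f ∉ ξ) ∧
      ∀ ζ, Λ.IsFilterES ζ → e ∈ ζ → (∀ f ∈ es, f ∉ ζ) → ∀ t ∈ J, t ∈ ζ ↔ t ∈ ξ := by
  obtain ⟨e, he, hζ⟩ :=
    hF.exists_mem_imp_subset hLS (J.filter (· ∈ ξ)) fun t ht => (Finset.mem_filter.mp ht).2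
  refine ⟨e, he, (J.filter fun t => t ∈ Λ.ESet ∧ t ∉ ξ).toList, by simp,
    fun ζ hFζ heζ hes t ht => ?_⟩
  by_cases htξ : t ∈ ξ
  · exact iff_of_true (hζ ζ hFζ heζ (by simp [ht, htξ])) htξ
  · refine iff_of_false (fun htζ => ?_) htξ
    exact hes t (by simp [ht, htξ, (hFζ.2.1 t htζ).1]) htζ

end Filters

section Cut

variable {Λ : LblSp V Ed A} {ξ : Set (Tr V A)}

@[simp] theorem Hcut_nil (ξ : Set (Tr V A)) : Λ.Hcut [] ξ = ξ := if_pos rfl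

theorem mem_Hcut_iff {μ : List A} (hμ : μ ≠ []) {t : Tr V A} :
    t ∈ Λ.Hcut μ ξ ↔ ∃ δ B, t = Tr.mk δ B δ ∧ B ∈ Λ.Aset δ ∧
      ∃ D, Tr.mk (μ ++ δ) D (μ ++ δ) ∈ ξ ∧ D ⊆ B := by
  rw [Hcut, if_neg hμ]; rfl

theorem mk_mem_Hcut_iff (hF : Λ.IsFilterES ξ) {μ δ : List A} {C : Set V} :
    Tr.mk δ C δ ∈ Λ.Hcut μ ξ ↔
      C ∈ Λ.Aset δ ∧ ∃ D, Tr.mk (μ ++ δ) D (μ ++ δ) ∈ ξ ∧ D ⊆ C := by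
  rcases eq_or_ne μ [] with rfl | hμ
  · simp only [Hcut_nil, List.nil_append]
    exact ⟨fun h => ⟨(hF.mk_mem h).2.1, C, h, subset_rfl⟩,
      fun ⟨hC, D, hD, hDC⟩ => hF.mem_of_subset hD hDC hC⟩
  · rw [mem_Hcut_iff hμ]
    constructor
    · rintro ⟨δ', B, h, hB, hD⟩
      cases h
      exact ⟨hB, hD⟩
    · rintro ⟨hC, hD⟩
      exact ⟨δ, C, rfl, hC, hD⟩

theorem mk_mem_Hcut_of_mem (hE : ∀ t ∈ ξ, t ∈ Λ.ESet ∧ t ≠ Tr.zero) {μ δ : List A}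
    {D : Set V} (hD : Tr.mk (μ ++ δ) D (μ ++ δ) ∈ ξ) : Tr.mk δ D δ ∈ Λ.Hcut μ ξ := by
  obtain ⟨-, ⟨hDA, hDr⟩, -⟩ := mk_mem_ESet.mp (hE _ hD).1
  rcases eq_or_ne μ [] with rfl | hμ
  · simpa using hD
  · exact (mem_Hcut_iff hμ).mpr
      ⟨δ, D, rfl, ⟨hDA, hDr.trans (Λ.rangeL_append_subset μ δ)⟩, D, hD, subset_rfl⟩

theorem Hcut_subset_ESet (hE : ∀ t ∈ ξ, t ∈ Λ.ESet ∧ t ≠ Tr.zero) (μ : List A) :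
    ∀ t ∈ Λ.Hcut μ ξ, t ∈ Λ.ESet ∧ t ≠ Tr.zero := by
  rcases eq_or_ne μ [] with rfl | hμ
  · simpa using hE
  · intro t ht
    obtain ⟨δ, B, rfl, hB, D, hD, hDB⟩ := (mem_Hcut_iff hμ).mp ht
    obtain ⟨hμδ, -, hDne⟩ := mk_mem_ESet.mp (hE _ hD).1
    exact ⟨mk_mem_ESet.mpr ⟨(Λ.mem_LStar_of_append hμδ).2, hB, hDne.mono hDB⟩, nofun⟩

theorem Hcut_Hcut (hE : ∀ t ∈ ξ, t ∈ Λ.ESet ∧ t ≠ Tr.zero) (μ δ : List A) :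
    Λ.Hcut δ (Λ.Hcut μ ξ) = Λ.Hcut (μ ++ δ) ξ := by
  rcases eq_or_ne δ [] with rfl | hδ
  · simp
  rcases eq_or_ne μ [] with rfl | hμ
  · simp
  ext t
  rw [mem_Hcut_iff hδ, mem_Hcut_iff (by simp [hμ])]
  constructor
  · rintro ⟨β, B, rfl, hB, D, hD, hDB⟩
    obtain ⟨_, _, h, -, D', hD', hD'D⟩ := (mem_Hcut_iff hμ).mp hD
    cases h
    exact ⟨β, B, rfl, hB, D', by rwa [← List.append_assoc] at hD', hD'D.trans hDB⟩
  · rintro ⟨β, B, rfl, hB, D, hD, hDB⟩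
    rw [List.append_assoc] at hD
    exact ⟨β, B, rfl, hB, D, mk_mem_Hcut_of_mem hE hD, hDB⟩

theorem HasWord.Hcut (hE : ∀ t ∈ ξ, t ∈ Λ.ESet ∧ t ≠ Tr.zero) {μ : List A} {γ : Word A}
    (hw : Λ.HasWord ξ (wappend μ γ)) : Λ.HasWord (Λ.Hcut μ ξ) γ := by
  rcases eq_or_ne μ [] with rfl | hμ
  · rwa [Hcut_nil, ← wappend_nil γ]
  intro β hβ
  rw [← wPrefix_append_wappend_iff, ← hw (μ ++ β) (by simp [hμ])]
  constructor
  · rintro ⟨B, hB⟩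
    obtain ⟨_, _, h, -, D, hD, -⟩ := (mem_Hcut_iff hμ).mp hB
    cases h
    exact ⟨D, hD⟩
  · rintro ⟨D, hD⟩
    exact ⟨D, mk_mem_Hcut_of_mem hE hD⟩

theorem IsFilterES.mem_LStar_of_hasWord (hF : Λ.IsFilterES ξ) {μ : List A} {γ : Word A}
    (hw : Λ.HasWord ξ (wappend μ γ)) : μ ∈ Λ.LStar := by
  rcases eq_or_ne μ [] with rfl | hμ
  · exact Λ.nil_mem_LStar
  · obtain ⟨C, hC⟩ := (hw μ hμ).mpr (wPrefix_wappend_self μ γ)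
    exact (hF.mk_mem hC).1

theorem sigmaMap_iterate (hE : ∀ t ∈ ξ, t ∈ Λ.ESet ∧ t ≠ Tr.zero) {μ : List A} {γ : Word A}
    (hw : Λ.HasWord ξ (wappend μ γ)) : Λ.sigmaMap^[μ.length] ξ = Λ.Hcut μ ξ := by
  induction μ generalizing ξ with
  | nil => rfl
  | cons a μ ih =>
    have hex : ∃ b : A, ∃ B, Tr.mk [b] B [b] ∈ ξ :=
      ⟨a, (hw [a] (by simp)).mpr ((wPrefix_wappend_self _ γ).of_prefix ⟨μ, rfl⟩)⟩
    have hchoose : hex.choose = a := by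
      obtain ⟨B, hB⟩ := hex.choose_spec
      have h := ((hw _ (by simp)).mp ⟨B, hB⟩).prefix_of_length_le
        (wPrefix_wappend_self (a :: μ) γ) (by simp)
      exact (List.cons_prefix_cons.mp h).1
    have hσ : Λ.sigmaMap ξ = Λ.Hcut [a] ξ := by rw [sigmaMap, dif_pos hex, hchoose]
    rw [← List.singleton_append, wappend_append] at hw
    rw [List.length_cons, Function.iterate_succ_apply, hσ,
      ih (Hcut_subset_ESet hE [a]) (hw.Hcut hE), Hcut_Hcut hE, List.singleton_append]

end Cut

section Transfer

/-- `r(νδ) ∖ (r(μδ) ∖ B)` is the largest subset of `r(νδ)` that meets `r(μδ)` only inside `B`.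
At the level `ω` the set `B` is kept as it is, since `r(ω) = E⁰` need not belong to `𝒜`. -/
noncomputable def transferAt (Λ : LblSp V Ed A) (μ ν δ : List A) (B : Set V) : Tr V A :=
  if ν ++ δ = [] then Tr.mk [] B []
  else Tr.mk (ν ++ δ) (Λ.rangeL (ν ++ δ) \ (Λ.rangeL (μ ++ δ) \ B)) (ν ++ δ)

noncomputable def transfer (Λ : LblSp V Ed A) (μ ν : List A) : Tr V A → Tr V A
  | Tr.zero => Tr.zero
  | Tr.mk β B _ =>
    if β <+: μ then Λ.transferAt μ ν [] (Λ.relRange B (μ.drop β.length))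
    else Λ.transferAt μ ν (β.drop μ.length) B

def ComparableWith (Λ : LblSp V Ed A) (μ : List A) (t : Tr V A) : Prop :=
  t ∈ Λ.ESet ∧ ∃ β B, t = Tr.mk β B β ∧ (β <+: μ ∨ μ <+: β)

variable {Λ : LblSp V Ed A} {η ξ : Set (Tr V A)}

theorem rangeL_sdiff_rangeL_sdiff_mem (hN : Λ.IsNormal) {α β : List A} (hα : α ∈ Λ.LStar)
    (hα' : α ≠ []) (hβ : β ∈ Λ.LStar) {B : Set V} (hB : B ∈ Λ.𝒜) :
    Λ.rangeL α \ (Λ.rangeL β \ B) ∈ Λ.𝒜 := by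
  have hLS := hN.toIsWLR.toIsLS
  rcases eq_or_ne β [] with rfl | hβ'
  · rw [rangeL_nil, ← Set.compl_eq_univ_sdiff, Set.sdiff_compl]
    exact hLS.inter_mem _ (hLS.range_mem α hα hα') _ hB
  · exact hN.sdiff_mem _ (hLS.range_mem α hα hα') _
      (hN.sdiff_mem _ (hLS.range_mem β hβ hβ') _ hB)

theorem mk_append_mem_iff_transferAt_mem (hN : Λ.IsNormal) (hFη : Λ.IsFilterES η)
    (hFξ : Λ.IsFilterES ξ) {μ ν : List A} (heq : Λ.Hcut μ η = Λ.Hcut ν ξ) {δ : List A}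
    {B : Set V} (hB : B ∈ Λ.Aset (μ ++ δ)) :
    Tr.mk (μ ++ δ) B (μ ++ δ) ∈ η ↔ Λ.transferAt μ ν δ B ∈ ξ := by
  have hBδ : B ∈ Λ.Aset δ := ⟨hB.1, hB.2.trans (Λ.rangeL_append_subset μ δ)⟩
  have hcut : Tr.mk (μ ++ δ) B (μ ++ δ) ∈ η ↔ Tr.mk δ B δ ∈ Λ.Hcut ν ξ := by
    rw [← heq, mk_mem_Hcut_iff hFη]
    exact ⟨fun h => ⟨hBδ, B, h, subset_rfl⟩, fun ⟨_, D, hD, hDB⟩ => hFη.mem_of_subset hD hDB hB⟩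
  rw [transferAt]
  split_ifs with hνδ
  · obtain ⟨rfl, rfl⟩ := List.append_eq_nil_iff.mp hνδ
    simpa [Hcut_nil] using hcut
  set G := Λ.rangeL (ν ++ δ) \ (Λ.rangeL (μ ++ δ) \ B)
  constructor
  · intro h
    obtain ⟨hμδL, -⟩ := hFη.mk_mem h
    obtain ⟨-, D, hD, hDB⟩ := (mk_mem_Hcut_iff hFξ).mp (hcut.mp h)
    obtain ⟨hνδL, ⟨-, hDr⟩, -⟩ := hFξ.mk_mem hD
    exact hFξ.mem_of_subset hD (fun x hx => ⟨hDr hx, fun h => h.2 (hDB hx)⟩)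
      ⟨rangeL_sdiff_rangeL_sdiff_mem hN hνδL hνδ hμδL hB.1, Set.sdiff_subset⟩
  · intro h
    obtain ⟨-, ⟨hGA, hGr⟩, -⟩ := hFξ.mk_mem h
    have hG : Tr.mk δ G δ ∈ Λ.Hcut μ η := by
      rw [heq, mk_mem_Hcut_iff hFξ]
      exact ⟨⟨hGA, hGr.trans (Λ.rangeL_append_subset ν δ)⟩, G, h, subset_rfl⟩
    obtain ⟨-, D, hD, hDG⟩ := (mk_mem_Hcut_iff hFη).mp hG
    obtain ⟨-, ⟨-, hDr⟩, -⟩ := hFη.mk_mem hD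
    refine hFη.mem_of_subset hD (fun x hx => ?_) hB
    by_contra hxB
    exact (hDG hx).2 ⟨hDr hx, hxB⟩

theorem IsFilterES.comparableWith_of_mem (hF : Λ.IsFilterES η) {μ : List A} {γ : Word A}
    (hw : Λ.HasWord η (wappend μ γ)) {t : Tr V A} (ht : t ∈ η) : Λ.ComparableWith μ t := by
  obtain ⟨β, B, rfl, -⟩ := hF.exists_eq_mk ht
  refine ⟨(hF.2.1 _ ht).1, β, B, rfl, ?_⟩
  rcases eq_or_ne β [] with rfl | hβ
  · exact Or.inl List.nil_prefix
  · exact ((hw β hβ).mp ⟨B, ht⟩).prefix_or_prefix (wPrefix_wappend_self μ γ)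

theorem mem_iff_transfer_mem (hN : Λ.IsNormal) (hFη : Λ.IsFilterES η)
    (hFξ : Λ.IsFilterES ξ) {μ ν : List A} {γ : Word A} (hw : Λ.HasWord η (wappend μ γ))
    (heq : Λ.Hcut μ η = Λ.Hcut ν ξ) {t : Tr V A} (ht : Λ.ComparableWith μ t) :
    t ∈ η ↔ Λ.transfer μ ν t ∈ ξ := by
  have hLS := hN.toIsWLR.toIsLS
  obtain ⟨htE, β, B, rfl, hβμ | ⟨δ, rfl⟩⟩ := ht
  all_goals obtain ⟨-, hB, -⟩ := mk_mem_ESet.mp htE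
  · obtain ⟨δ, rfl⟩ := hβμ
    have hBδ : Λ.relRange B δ ∈ Λ.Aset (β ++ δ) :=
      ⟨hLS.relRange_mem B hB.1 δ (Λ.mem_LStar_of_append (hFη.mem_LStar_of_hasWord hw)).2,
        Λ.relRange_subset_rangeL_append hB.2 δ⟩
    have hlevel : Tr.mk β B β ∈ η ↔ Tr.mk (β ++ δ) (Λ.relRange B δ) (β ++ δ) ∈ η := by
      rcases eq_or_ne (β ++ δ) [] with hβδ | hβδ
      · obtain ⟨rfl, rfl⟩ := List.append_eq_nil_iff.mp hβδ
        simp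
      · obtain ⟨C, hC⟩ := (hw _ hβδ).mpr (wPrefix_wappend_self _ γ)
        exact hFη.mk_mem_iff_relRange_mem hLS hC hB
    simpa [transfer, hlevel] using
      mk_append_mem_iff_transferAt_mem hN hFη hFξ heq (δ := []) (by simpa using hBδ)
  · by_cases hδ : μ ++ δ <+: μ
    · obtain rfl : δ = [] := by simpa using hδ.length_le
      simpa [transfer] using
        mk_append_mem_iff_transferAt_mem hN hFη hFξ heq (δ := []) (by simpa using hB)
    · simpa [transfer, hδ] using mk_append_mem_iff_transferAt_mem hN hFη hFξ heq hB

theorem forall_mem_iff_of_forall_transfer_mem_iff (hN : Λ.IsNormal) {η' ξ' : Set (Tr V A)}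
    (hFη : Λ.IsFilterES η) (hFξ : Λ.IsFilterES ξ) (hFη' : Λ.IsFilterES η')
    (hFξ' : Λ.IsFilterES ξ') {μ ν : List A} {γ γ' : Word A} (hw : Λ.HasWord η (wappend μ γ))
    (hw' : Λ.HasWord η' (wappend μ γ')) (heq : Λ.Hcut μ η = Λ.Hcut ν ξ)
    (heq' : Λ.Hcut μ η' = Λ.Hcut ν ξ') {I : Finset (Tr V A)}
    (hI : ∀ t ∈ (I.filter (Λ.ComparableWith μ)).image (Λ.transfer μ ν), t ∈ ξ' ↔ t ∈ ξ) :
    ∀ t ∈ I, t ∈ η' ↔ t ∈ η := by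
  intro t ht
  by_cases hc : Λ.ComparableWith μ t
  · rw [mem_iff_transfer_mem hN hFη' hFξ' hw' heq' hc, mem_iff_transfer_mem hN hFη hFξ hw heq hc]
    exact hI _ (Finset.mem_image_of_mem _ (Finset.mem_filter.mpr ⟨ht, hc⟩))
  · exact iff_of_false (fun h => hc (hFη'.comparableWith_of_mem hw' h))
      fun h => hc (hFη.comparableWith_of_mem hw h)

theorem eq_of_Hcut_eq (hN : Λ.IsNormal) {η' : Set (Tr V A)} (hFη : Λ.IsFilterES η)
    (hFη' : Λ.IsFilterES η') {μ : List A} {γ γ' : Word A} (hw : Λ.HasWord η (wappend μ γ))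
    (hw' : Λ.HasWord η' (wappend μ γ')) (heq : Λ.Hcut μ η = Λ.Hcut μ η') : η = η' := by
  ext t
  by_cases ht : Λ.ComparableWith μ t
  · rw [mem_iff_transfer_mem hN hFη hFη' hw heq ht, mem_iff_transfer_mem hN hFη' hFη' hw' rfl ht]
  · exact iff_of_false (fun h => ht (hFη.comparableWith_of_mem hw h))
      fun h => ht (hFη'.comparableWith_of_mem hw' h)

theorem exists_mk_mem_subset_rangeL (hLS : Λ.IsLS) (hFη : Λ.IsFilterES η)
    (hFξ : Λ.IsFilterES ξ) {μ ν : List A} {γ : Word A} (hw : Λ.HasWord η (wappend μ γ))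
    (hμ : μ ≠ []) (heq : Λ.Hcut μ η = Λ.Hcut ν ξ) :
    ∃ D, Tr.mk ν D ν ∈ ξ ∧ D ⊆ Λ.rangeL μ := by
  obtain ⟨C, hC⟩ := (hw μ hμ).mpr (wPrefix_wappend_self μ γ)
  have hrange : Tr.mk ([] : List A) (Λ.rangeL μ) [] ∈ Λ.Hcut μ η := by
    rw [mk_mem_Hcut_iff hFη, List.append_nil]
    exact ⟨⟨hLS.range_mem μ (hFη.mk_mem hC).1 hμ, by simp⟩, C, hC, (hFη.mk_mem hC).2.1.2⟩
  rw [heq, mk_mem_Hcut_iff hFξ, List.append_nil] at hrange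
  exact hrange.2

theorem exists_mk_mem_SSet (hLS : Λ.IsLS) (hFη : Λ.IsFilterES η) (hFξ : Λ.IsFilterES ξ)
    {μ ν : List A} {γ : Word A} (hwη : Λ.HasWord η (wappend μ γ))
    (hwξ : Λ.HasWord ξ (wappend ν γ)) (heq : Λ.Hcut μ η = Λ.Hcut ν ξ) :
    ∃ X, Tr.mk μ X ν ∈ Λ.SSet := by
  have hμL := hFη.mem_LStar_of_hasWord hwη
  have hνL := hFξ.mem_LStar_of_hasWord hwξ
  rcases eq_or_ne μ [] with rfl | hμ
  · rcases eq_or_ne ν [] with rfl | hν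
    · obtain ⟨t, ht⟩ := hFξ.1
      obtain ⟨β, C, rfl, -, ⟨hC, -⟩, hCne⟩ := hFξ.exists_eq_mk ht
      exact ⟨C, Or.inr ⟨[], C, [], rfl, hμL, hνL, ⟨hC, by simp⟩, ⟨hC, by simp⟩, hCne⟩⟩
    · obtain ⟨D, hD, hDν⟩ := exists_mk_mem_subset_rangeL hLS hFξ hFη hwξ hν heq.symm
      obtain ⟨-, hDA, hDne⟩ := hFη.mk_mem hD
      exact ⟨D, Or.inr ⟨[], D, ν, rfl, hμL, hνL, hDA, ⟨hDA.1, hDν⟩, hDne⟩⟩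
  · obtain ⟨D, hD, hDμ⟩ := exists_mk_mem_subset_rangeL hLS hFη hFξ hwη hμ heq
    obtain ⟨-, hDA, hDne⟩ := hFξ.mk_mem hD
    exact ⟨D, Or.inr ⟨μ, D, ν, rfl, hμL, hνL, ⟨hDA.1, hDμ⟩, hDA, hDne⟩⟩

end Transfer

section Topology

variable {Λ : LblSp V Ed A}

theorem continuous_charOf_apply (t : Tr V A) :
    Continuous fun ξ : Λ.TightT => Λ.charOf ξ.carrier t :=
  (continuous_apply t).comp (continuous_induced_dom (f := fun ξ : Λ.TightT => Λ.charOf ξ.carrier))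

theorem isOpen_setOf_mem_carrier (t : Tr V A) : IsOpen {ξ : Λ.TightT | t ∈ ξ.carrier} := by
  convert (continuous_charOf_apply t).isOpen_preimage {true} (isOpen_discrete _) using 1
  ext ξ
  simp [charOf]

theorem isOpen_setOf_not_mem_carrier (t : Tr V A) : IsOpen {ξ : Λ.TightT | t ∉ ξ.carrier} := by
  convert (continuous_charOf_apply t).isOpen_preimage {false} (isOpen_discrete _) using 1
  ext ξ
  simp [charOf]

theorem isOpen_VrawGen (e : Tr V A) (es : List (Tr V A)) :
    IsOpen {ξ : Λ.TightT | ξ.carrier ∈ Λ.VrawGen e es} := by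
  have h := (isOpen_setOf_mem_carrier (Λ := Λ) e).inter
    (isOpen_biInter_finset fun f (_ : f ∈ es.toFinset) => isOpen_setOf_not_mem_carrier (Λ := Λ) f)
  convert h using 1
  ext ξ
  simp [VrawGen, ξ.tight]

theorem exists_finset_forall_mem_iff_imp_mem {S : Set Λ.TightT} (hS : IsOpen S) {ξ : Λ.TightT}
    (hξ : ξ ∈ S) : ∃ I : Finset (Tr V A),
      ∀ ζ : Λ.TightT, (∀ t ∈ I, t ∈ ζ.carrier ↔ t ∈ ξ.carrier) → ζ ∈ S := by
  obtain ⟨O, hO, rfl⟩ := isOpen_induced_iff.mp hS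
  obtain ⟨I, u, hu, hIu⟩ := isOpen_pi_iff.mp hO _ hξ
  refine ⟨I, fun ζ hζ => hIu fun t ht => ?_⟩
  have hchar : Λ.charOf ζ.carrier t = Λ.charOf ξ.carrier t := by simp [charOf, hζ t ht]
  show Λ.charOf ζ.carrier t ∈ u t
  exact hchar ▸ (hu t ht).2

variable (Λ) in
def cylinder (μ : List A) : Set (Set (Tr V A)) :=
  {ξ | Λ.IsTightFilter ξ ∧ ∃ γ : Word A, Λ.HasWord ξ (wappend μ γ)}

theorem isOpen_cylinder (hLS : Λ.IsLS) (μ : List A) :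
    IsOpen {ξ : Λ.TightT | ξ.carrier ∈ Λ.cylinder μ} := by
  rcases eq_or_ne μ [] with rfl | hμ
  · convert isOpen_univ
    ext ξ
    simpa [cylinder, wappend_nil, ξ.tight] using ξ.tight.1.exists_hasWord hLS
  · convert isOpen_iUnion fun B : Set V => isOpen_setOf_mem_carrier (Λ := Λ) (Tr.mk μ B μ)
    ext ξ
    simp only [cylinder, Set.mem_ofPred_eq, Set.mem_iUnion, ξ.tight, true_and]
    constructor
    · rintro ⟨γ, hw⟩
      exact (hw μ hμ).mpr (wPrefix_wappend_self μ γ)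
    · rintro ⟨B, hB⟩
      obtain ⟨α, hα⟩ := ξ.tight.1.exists_hasWord hLS
      obtain ⟨γ, rfl⟩ := ((hα μ hμ).mp ⟨B, hB⟩).exists_wappend
      exact ⟨γ, hα⟩

theorem sigmaMap_iterate_eq_Hcut {μ : List A} {ξ : Set (Tr V A)} (hξ : ξ ∈ Λ.cylinder μ) :
    Λ.sigmaMap^[μ.length] ξ = Λ.Hcut μ ξ :=
  sigmaMap_iterate hξ.1.1.2.1 hξ.2.choose_spec

theorem injOn_sigmaMap_iterate_cylinder (hN : Λ.IsNormal) (μ : List A) :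
    Set.InjOn Λ.sigmaMap^[μ.length] (Λ.cylinder μ) := fun _ hη _ hη' h => by
  rw [sigmaMap_iterate_eq_Hcut hη, sigmaMap_iterate_eq_Hcut hη'] at h
  exact eq_of_Hcut_eq hN hη.1.1 hη'.1.1 hη.2.choose_spec hη'.2.choose_spec h

theorem exists_hasWord_le_wlength_of_mem_cylinder {μ : List A} {ξ : Set (Tr V A)}
    (hξ : ξ ∈ Λ.cylinder μ) :
    Λ.IsTightFilter ξ ∧ ∃ α : Word A, Λ.HasWord ξ α ∧ (μ.length : ℕ∞) ≤ wlength α :=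
  ⟨hξ.1, _, hξ.2.choose_spec, length_le_wlength_wappend μ _⟩

theorem exists_mem_cylinder_of_le_wlength (hη : Λ.IsTightFilter η) {α : Word A}
    (hα : Λ.HasWord η α) {m : ℕ} (hm : (m : ℕ∞) ≤ wlength α) :
    ∃ μ : List A, μ.length = m ∧ η ∈ Λ.cylinder μ := by
  obtain ⟨γ, hγ⟩ := exists_wappend_wprefix hm
  exact ⟨wprefix α m, wprefix_length hm, hη, γ, hγ ▸ hα⟩

theorem exists_hasWord_wappend_of_Hcut_eq {μ ν : List A} (hη : η ∈ Λ.cylinder μ)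
    (hξ : ξ ∈ Λ.cylinder ν) (heq : Λ.Hcut μ η = Λ.Hcut ν ξ) :
    ∃ γ : Word A, Λ.HasWord η (wappend μ γ) ∧ Λ.HasWord ξ (wappend ν γ) := by
  obtain ⟨γ, hwη⟩ := hη.2
  obtain ⟨γ', hwξ⟩ := hξ.2
  have hγ : γ = γ' := (hwη.Hcut hη.1.1.2.1).unique (heq ▸ hwξ.Hcut hξ.1.1.2.1)
  exact ⟨γ, hwη, hγ ▸ hwξ⟩

end Topology

section Gamma

def renaultDeaconuBasis (Λ : LblSp V Ed A) : Set (Set Λ.GammaT) :=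
  {Z : Set Λ.GammaT | ∃ (Xs Ys : Set (Set (Tr V A))) (m n : ℕ),
    (∀ ξ ∈ Xs, Λ.IsTightFilter ξ ∧
      ∃ α : Word A, Λ.HasWord ξ α ∧ (m : ℕ∞) ≤ wlength α) ∧
    (∀ ξ ∈ Ys, Λ.IsTightFilter ξ ∧
      ∃ α : Word A, Λ.HasWord ξ α ∧ (n : ℕ∞) ≤ wlength α) ∧
    IsOpen {ξ : Λ.TightT | ξ.carrier ∈ Xs} ∧
    IsOpen {ξ : Λ.TightT | ξ.carrier ∈ Ys} ∧
    Set.InjOn (Λ.sigmaMap)^[m] Xs ∧ Set.InjOn (Λ.sigmaMap)^[n] Ys ∧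
    Z = {p : Λ.GammaT | Λ.rawOf p ∈ Λ.VrdRaw Xs Ys m n}}

variable {Λ : LblSp V Ed A}

theorem ZBasisT_subset_renaultDeaconuBasis (hN : Λ.IsNormal) :
    Λ.ZBasisT ⊆ Λ.renaultDeaconuBasis := by
  rintro Z ⟨μ, X, ν, e, es, -, -, -, rfl⟩
  have hLS := hN.toIsWLR.toIsLS
  refine ⟨Λ.cylinder μ, Λ.cylinder ν ∩ Λ.VrawGen e es, μ.length, ν.length,
    fun _ hξ => exists_hasWord_le_wlength_of_mem_cylinder hξ,
    fun _ hξ => exists_hasWord_le_wlength_of_mem_cylinder hξ.1,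
    isOpen_cylinder hLS μ, (isOpen_cylinder hLS ν).inter (isOpen_VrawGen e es),
    injOn_sigmaMap_iterate_cylinder hN μ,
    (injOn_sigmaMap_iterate_cylinder hN ν).mono Set.inter_subset_left, ?_⟩
  ext p
  simp only [ZrawGen, VrdRaw, rawOf, VrawGen, cylinder, Set.mem_ofPred_eq, Set.mem_inter_iff,
    p.fst.tight, p.lst.tight, true_and]
  constructor
  · rintro ⟨hIn, hmid, he, hes, γ, hwη, hwξ, heq⟩
    refine ⟨hIn, hmid, ⟨γ, hwη⟩, ⟨⟨γ, hwξ⟩, he, hes⟩, ?_⟩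
    rwa [sigmaMap_iterate p.fst.tight.1.2.1 hwη, sigmaMap_iterate p.lst.tight.1.2.1 hwξ]
  · rintro ⟨hIn, hmid, hη, ⟨hξ, he, hes⟩, hσ⟩
    rw [sigmaMap_iterate_eq_Hcut ⟨p.fst.tight, hη⟩,
      sigmaMap_iterate_eq_Hcut ⟨p.lst.tight, hξ⟩] at hσ
    obtain ⟨γ, hwη, hwξ⟩ :=
      exists_hasWord_wappend_of_Hcut_eq ⟨p.fst.tight, hη⟩ ⟨p.lst.tight, hξ⟩ hσ
    exact ⟨hIn, hmid, he, hes, γ, hwη, hwξ, hσ⟩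

theorem exists_mem_ZBasisT_subset_of_mem_renaultDeaconuBasis (hN : Λ.IsNormal)
    {W : Set Λ.GammaT} (hW : W ∈ Λ.renaultDeaconuBasis) {p : Λ.GammaT} (hp : p ∈ W) :
    ∃ Z ∈ Λ.ZBasisT, p ∈ Z ∧ Z ⊆ W := by
  have hLS := hN.toIsWLR.toIsLS
  obtain ⟨Xs, Ys, m, n, hXs, hYs, hXo, hYo, -, -, rfl⟩ := hW
  simp only [VrdRaw, rawOf, Set.mem_ofPred_eq] at hp
  obtain ⟨hIn, hmid, hη, hξ, hσ⟩ := hp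
  have hFξ := p.lst.tight.1
  obtain ⟨-, α, hα, hm⟩ := hXs _ hη
  obtain ⟨-, β, hβ, hn⟩ := hYs _ hξ
  obtain ⟨μ, rfl, hημ⟩ := exists_mem_cylinder_of_le_wlength p.fst.tight hα hm
  obtain ⟨ν, rfl, hξν⟩ := exists_mem_cylinder_of_le_wlength p.lst.tight hβ hn
  rw [sigmaMap_iterate_eq_Hcut hημ, sigmaMap_iterate_eq_Hcut hξν] at hσ
  obtain ⟨γ, hwη, hwξ⟩ := exists_hasWord_wappend_of_Hcut_eq hημ hξν hσ
  obtain ⟨Iη, hIη⟩ := exists_finset_forall_mem_iff_imp_mem hXo (ξ := p.fst) hη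
  obtain ⟨Iξ, hIξ⟩ := exists_finset_forall_mem_iff_imp_mem hYo (ξ := p.lst) hξ
  obtain ⟨e, he, es, hes, hcontrol⟩ := hFξ.exists_mem_forall_mem_iff hLS
    ((Iη.filter (Λ.ComparableWith μ)).image (Λ.transfer μ ν) ∪ Iξ)
  obtain ⟨X, hX⟩ := exists_mk_mem_SSet hLS p.fst.tight.1 hFξ hwη hwξ hσ
  refine ⟨_, ⟨μ, X, ν, e, es, hX, (hFξ.2.1 e he).1, fun f hf => (hes f hf).1, rfl⟩,
    ⟨hIn, hmid, he, fun f hf => (hes f hf).2, γ, hwη, hwξ, hσ⟩, ?_⟩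
  rintro q ⟨hIn', hmid', he', hes', γ', hwη', hwξ', hσ'⟩
  have hagree := hcontrol _ q.lst.tight.1 he' hes'
  refine ⟨hIn', hmid', hIη q.fst ?_, hIξ q.lst fun t ht => hagree t (Finset.mem_union_right _ ht),
    ?_⟩
  · exact forall_mem_iff_of_forall_transfer_mem_iff hN p.fst.tight.1 hFξ q.fst.tight.1
      q.lst.tight.1 hwη hwη' hσ hσ' fun t ht => hagree t (Finset.mem_union_left _ ht)
  · change Λ.sigmaMap^[μ.length] q.fst.carrier = Λ.sigmaMap^[ν.length] q.lst.carrier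
    rwa [sigmaMap_iterate q.fst.tight.1.2.1 hwη', sigmaMap_iterate q.lst.tight.1.2.1 hwξ']

end Gamma

end LblSp

namespace LblSp

variable {V : Type u} {Ed : Type v} {A : Type w} (Λ : LblSp V Ed A)

/-- The topology on `Γ` with basis the sets `Z_{s,e:e₁,…,eₙ}`
coincides with the Renault–Deaconu topology, whose basic open sets are the sets
`𝒱(X, Y, m, n) = {(η, m-n, ξ) ∈ Γ : (η, ξ) ∈ X × Y, σ^m(η) = σ^n(ξ)}` for `X ⊆ dom(σ^m)`
and `Y ⊆ dom(σ^n)` open with `σ^m|_X`, `σ^n|_Y` injective. -/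
theorem statement_6 (hΛ : Λ.IsNormal) :
    TopologicalSpace.generateFrom Λ.ZBasisT =
      TopologicalSpace.generateFrom
        {Z : Set Λ.GammaT | ∃ (Xs Ys : Set (Set (Tr V A))) (m n : ℕ),
          (∀ ξ ∈ Xs, Λ.IsTightFilter ξ ∧
            ∃ α : Word A, Λ.HasWord ξ α ∧ (m : ℕ∞) ≤ wlength α) ∧
          (∀ ξ ∈ Ys, Λ.IsTightFilter ξ ∧
            ∃ α : Word A, Λ.HasWord ξ α ∧ (n : ℕ∞) ≤ wlength α) ∧
          IsOpen {ξ : Λ.TightT | ξ.carrier ∈ Xs} ∧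
          IsOpen {ξ : Λ.TightT | ξ.carrier ∈ Ys} ∧
          Set.InjOn (Λ.sigmaMap)^[m] Xs ∧ Set.InjOn (Λ.sigmaMap)^[n] Ys ∧
          Z = {p : Λ.GammaT | Λ.rawOf p ∈ Λ.VrdRaw Xs Ys m n}} := by
  change _ = TopologicalSpace.generateFrom Λ.renaultDeaconuBasis
  let _ : TopologicalSpace Λ.GammaT := TopologicalSpace.generateFrom Λ.ZBasisT
  refine le_antisymm (le_generateFrom fun W hW => isOpen_iff_forall_mem_open.mpr fun p hp => ?_)
    (le_generateFrom fun Z hZ =>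
      TopologicalSpace.isOpen_generateFrom_of_mem (ZBasisT_subset_renaultDeaconuBasis hΛ hZ))
  obtain ⟨Z, hZ, hpZ, hZW⟩ := exists_mem_ZBasisT_subset_of_mem_renaultDeaconuBasis hΛ hW hp
  exact ⟨Z, hZW, TopologicalSpace.isOpen_generateFrom_of_mem hZ, hpZ⟩

end LblSp
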